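/- arXiv:2412.07287 — 4 statements merged into one kernel-verified Lean document; each statement's English description precedes it below -/
import Mathlib

section
/- Fix v ∈ ℝ³, a unit vector ξ ∈ ℝ³, θ ∈ (0, π/2) and R > 0. Let D = { v* ∈ ℝ³ : v* ≠ v and |⟨(v − v*)/|v − v*|, ξ⟩| > cos θ }. Then the Lebesgue measure of D ∩ { |v*| ≤ R } is at most 2π R (|v| + R)² tan²θ. -/
/-!
A point `w ≠ v` of the cone with `‖w‖ ≤ R` satisfies `|⟪ξ, w⟫| ≤ R`, and its distance to the axis
`v + ℝ ξ` is `‖v - w‖ sin φ` with `φ < θ` the angle between `v - w` and `±ξ`, hence at most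
`(‖v‖ + R) sin θ`. So the set lies in a solid cylinder of height `2R` and radius `(‖v‖ + R) sin θ`,
whose volume `2πR (‖v‖ + R)² sin² θ`, computed in an orthonormal basis starting with `ξ`, is at
most the claimed bound.
-/

open MeasureTheory Metric Module
open scoped RealInnerProductSpace

theorem OrthonormalBasis.exists_apply_zero_eq {𝕜 E : Type*} [RCLike 𝕜] [NormedAddCommGroup E]
    [InnerProductSpace 𝕜 E] {n : ℕ} (hE : finrank 𝕜 E = n + 1) {ξ : E} (hξ : ‖ξ‖ = 1) :
    ∃ b : OrthonormalBasis (Fin (n + 1)) 𝕜 E, b 0 = ξ := by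
  have := Module.finite_of_finrank_eq_succ hE
  have hξ' : Orthonormal 𝕜 (({0} : Set (Fin (n + 1))).domRestrict fun _ => ξ) := by
    simp [hξ]
  obtain ⟨b, hb⟩ := hξ'.exists_orthonormalBasis_extension_of_card_eq (by simpa using hE)
  exact ⟨b, hb 0 rfl⟩

theorem EuclideanSpace.norm_sq_eq_sq_add_norm_tail_sq {n : ℕ}
    (x : EuclideanSpace ℝ (Fin (n + 1))) :
    ‖x‖ ^ 2 = x 0 ^ 2 + ‖WithLp.toLp 2 (Fin.tail x.ofLp)‖ ^ 2 := by
  simp [EuclideanSpace.norm_sq_eq, Fin.sum_univ_succ, Fin.tail]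

theorem EuclideanSpace.measurePreserving_fst_tail (n : ℕ) :
    MeasurePreserving (fun x : EuclideanSpace ℝ (Fin (n + 1)) =>
      (x 0, WithLp.toLp 2 (Fin.tail x.ofLp))) volume (volume.prod volume) := by
  have hsplit := (measurePreserving_piFinSuccAbove (fun _ : Fin (n + 1) => (volume : Measure ℝ))
    0).comp (PiLp.volume_preserving_ofLp (Fin (n + 1)))
  have htail :=
    (MeasurePreserving.id (volume : Measure ℝ)).prod (PiLp.volume_preserving_toLp (Fin n))
  convert htail.comp hsplit using 1
  · rfl
  · funext x
    simp

section Cylinder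

variable {E : Type*} [NormedAddCommGroup E] [InnerProductSpace ℝ E]

/-- The solid cylinder of height `2h` along the unit vector `ξ` and radius `ρ` around the line
`v + ℝ ξ`: for `‖ξ‖ = 1`, `‖w - v‖ ^ 2 - ⟪ξ, w - v⟫ ^ 2` is the squared distance from `w` to that
line. -/
def solidCylinder (ξ v : E) (h ρ : ℝ) : Set E :=
  {w | |⟪ξ, w⟫| ≤ h ∧ ‖w - v‖ ^ 2 - ⟪ξ, w - v⟫ ^ 2 ≤ ρ ^ 2}

theorem OrthonormalBasis.norm_sq_sub_inner_sq_eq {n : ℕ} (b : OrthonormalBasis (Fin (n + 1)) ℝ E)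
    (u : E) : ‖u‖ ^ 2 - ⟪b 0, u⟫ ^ 2 = ‖WithLp.toLp 2 (Fin.tail (b.repr u).ofLp)‖ ^ 2 := by
  rw [← b.repr.norm_map u, EuclideanSpace.norm_sq_eq_sq_add_norm_tail_sq, b.repr_apply_apply]
  ring

theorem volume_solidCylinder [FiniteDimensional ℝ E] [MeasurableSpace E] [BorelSpace E] {n : ℕ}
    (hE : finrank ℝ E = n + 1) {ξ : E} (hξ : ‖ξ‖ = 1) (v : E) (h : ℝ) {ρ : ℝ} (hρ : 0 ≤ ρ) :
    volume (solidCylinder ξ v h ρ) =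
      ENNReal.ofReal (2 * h) * volume (closedBall (0 : EuclideanSpace ℝ (Fin n)) ρ) := by
  obtain ⟨b, rfl⟩ := OrthonormalBasis.exists_apply_zero_eq hE hξ
  set c := WithLp.toLp 2 (Fin.tail (b.repr v).ofLp)
  have hpre : solidCylinder (b 0) v h ρ =
      ((fun x : EuclideanSpace ℝ (Fin (n + 1)) => (x 0, WithLp.toLp 2 (Fin.tail x.ofLp))) ∘
        b.repr) ⁻¹' (Set.Icc (-h) h ×ˢ closedBall c ρ) := by
    ext w
    simp only [solidCylinder, Set.mem_ofPred_eq, Set.mem_preimage, Function.comp_apply,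
      Set.mem_prod, Set.mem_Icc, ← abs_le, mem_closedBall, dist_eq_norm,
      b.norm_sq_sub_inner_sq_eq, b.repr_apply_apply]
    rw [map_sub, sq_le_sq₀ (norm_nonneg _) hρ]
    rfl
  have hmp := (EuclideanSpace.measurePreserving_fst_tail n).comp b.measurePreserving_repr
  rw [hpre,
    hmp.measure_preimage (measurableSet_Icc.prod measurableSet_closedBall).nullMeasurableSet,
    Measure.prod_prod, Real.volume_Icc, Measure.addHaar_closedBall_center]
  ring_nf

def twoSidedCone (v ξ : E) (θ : ℝ) : Set E :=
  {w | w ≠ v ∧ Real.cos θ < |⟪‖v - w‖⁻¹ • (v - w), ξ⟫|}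

theorem twoSidedCone_inter_subset_solidCylinder {ξ : E} (hξ : ‖ξ‖ = 1) {θ : ℝ}
    (hθ : 0 ≤ Real.cos θ) (v : E) (R : ℝ) :
    twoSidedCone v ξ θ ∩ {w | ‖w‖ ≤ R} ⊆ solidCylinder ξ v R ((‖v‖ + R) * |Real.sin θ|) := by
  rintro w ⟨⟨hwv, hcone⟩, hwR : ‖w‖ ≤ R⟩
  set u := v - w
  have hu : 0 < ‖u‖ := norm_pos_iff.2 (sub_ne_zero.2 hwv.symm)
  have hcos : Real.cos θ * ‖u‖ < |⟪u, ξ⟫| := by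
    rwa [real_inner_smul_left, abs_mul, abs_inv, abs_norm, inv_mul_eq_div, lt_div_iff₀ hu] at hcone
  have hcos_sq : Real.cos θ ^ 2 * ‖u‖ ^ 2 ≤ ⟪u, ξ⟫ ^ 2 := by
    rw [← mul_pow, ← sq_abs ⟪u, ξ⟫]
    exact pow_le_pow_left₀ (by positivity) hcos.le 2
  have hnorm : ‖w - v‖ = ‖u‖ := norm_sub_rev w v
  have hinner : ⟪ξ, w - v⟫ = -⟪u, ξ⟫ := by
    rw [← neg_sub, inner_neg_right, real_inner_comm]
  have hu_le : ‖u‖ ≤ ‖v‖ + R := (norm_sub_le v w).trans (by linarith)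
  refine ⟨?_, ?_⟩
  · calc |⟪ξ, w⟫| ≤ ‖ξ‖ * ‖w‖ := abs_real_inner_le_norm ξ w
      _ ≤ R := by rwa [hξ, one_mul]
  · calc ‖w - v‖ ^ 2 - ⟪ξ, w - v⟫ ^ 2 ≤ ‖u‖ ^ 2 * Real.sin θ ^ 2 := by
          rw [hnorm, hinner, neg_sq, Real.sin_sq]
          linarith
      _ ≤ ((‖v‖ + R) * |Real.sin θ|) ^ 2 := by
          rw [mul_pow, sq_abs]
          gcongr

end Cylinder

theorem Real.sin_sq_le_tan_sq {x : ℝ} (hx : Real.cos x ≠ 0) : Real.sin x ^ 2 ≤ Real.tan x ^ 2 := by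
  rw [Real.tan_eq_sin_div_cos, div_pow]
  exact le_div_self (sq_nonneg _) (by positivity) (Real.cos_sq_le_one x)

/-- The part of the two-sided cone with vertex `v`, axis `ξ` and half-angle `θ`
lying in the ball `{|w| ≤ R}` has Lebesgue measure at most `2πR(|v|+R)² tan²θ`. -/
theorem stmt_2 (v ξ : EuclideanSpace ℝ (Fin 3)) (hξ : ‖ξ‖ = 1) (θ R : ℝ)
    (hθ : θ ∈ Set.Ioo 0 (Real.pi / 2)) (hR : 0 < R) :
    volume ({w : EuclideanSpace ℝ (Fin 3) | w ≠ v ∧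
        Real.cos θ < |(inner ℝ (‖v - w‖⁻¹ • (v - w) : EuclideanSpace ℝ (Fin 3)) ξ : ℝ)|} ∩
      {w : EuclideanSpace ℝ (Fin 3) | ‖w‖ ≤ R}) ≤
      ENNReal.ofReal (2 * Real.pi * R * (‖v‖ + R) ^ 2 * Real.tan θ ^ 2) := by
  have hcos : 0 < Real.cos θ := Real.cos_pos_of_mem_Ioo ⟨by linarith [Real.pi_pos, hθ.1], hθ.2⟩
  set ρ := (‖v‖ + R) * |Real.sin θ|
  have hρ : 0 ≤ ρ := mul_nonneg (by positivity) (abs_nonneg _)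
  calc _ ≤ volume (solidCylinder ξ v R ρ) :=
        measure_mono (twoSidedCone_inter_subset_solidCylinder hξ hcos.le v R)
    _ = ENNReal.ofReal (2 * R) * (ENNReal.ofReal ρ ^ 2 * ENNReal.ofReal Real.pi) := by
        rw [volume_solidCylinder finrank_euclideanSpace_fin hξ v R hρ,
          EuclideanSpace.volume_closedBall_fin_two]
    _ = ENNReal.ofReal (2 * Real.pi * R * (‖v‖ + R) ^ 2 * Real.sin θ ^ 2) := by
        rw [← ENNReal.ofReal_pow hρ, ← ENNReal.ofReal_mul (by positivity),
          ← ENNReal.ofReal_mul (by positivity), mul_pow, sq_abs]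
        ring_nf
    _ ≤ _ := ENNReal.ofReal_le_ofReal <|
        mul_le_mul_of_nonneg_left (Real.sin_sq_le_tan_sq hcos.ne') (by positivity)
end

section
/- Let g : ℝ³ → [0, ∞) be measurable with ∫ g ≥ δ > 0, ∫ g(v)(1+|v|²) dv ≤ λ, and ∫ g log(1 + g) dv ≤ λ. Then there is a constant c = c(δ, λ) > 0 such that for every v ∈ ℝ³, ∫_{ℝ³} |v − v*|⁻¹ g(v*) dv* ≥ c (1 + |v|²)^{-1/2}. -/
/-! By Chebyshev's inequality the energy bound confines half of the mass `δ` to a ball of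
radius `R = R(δ, λ)`, and for `w` in that ball `|v - w| ≤ |v| + R ≤ (1 + R) ⟨v⟩`, so the
potential is at least `(δ / 2) (1 + R)⁻¹ ⟨v⟩⁻¹`. -/

open MeasureTheory Metric

open scoped ENNReal

lemma inv_le_inv_norm_sub_of_mem_closedBall {E : Type*} [NormedAddCommGroup E] {R : ℝ}
    (hR : 0 ≤ R) {v w : E} (hw : w ∈ closedBall 0 R) (hvw : w ≠ v) :
    (1 + R)⁻¹ * (1 + ‖v‖ ^ 2) ^ (-(1 : ℝ) / 2) ≤ ‖v - w‖⁻¹ := by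
  set bracket := √(1 + ‖v‖ ^ 2)
  have hbracket : (1 + ‖v‖ ^ 2) ^ (-(1 : ℝ) / 2) = bracket⁻¹ := by
    rw [neg_div, Real.rpow_neg (by positivity), ← Real.sqrt_eq_rpow]
  have hone : 1 ≤ bracket := Real.one_le_sqrt.2 (le_add_of_nonneg_right (by positivity))
  have hnorm : ‖v‖ ≤ bracket := Real.le_sqrt_of_sq_le (by linarith)
  have hwR : ‖w‖ ≤ R := by simpa using hw
  rw [hbracket, ← mul_inv]
  refine inv_anti₀ (norm_pos_iff.2 (sub_ne_zero.2 hvw.symm)) ?_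
  calc ‖v - w‖ ≤ ‖v‖ + ‖w‖ := norm_sub_le v w
    _ ≤ (1 + R) * bracket := by nlinarith

section CoulombLowerBound

variable {E : Type*} [NormedAddCommGroup E] [MeasurableSpace E] [OpensMeasurableSpace E]
  {μ : Measure E}

lemma setLIntegral_compl_closedBall_mul_le (f : E → ℝ≥0∞) {R : ℝ} (hR : 0 ≤ R) :
    (∫⁻ w in (closedBall 0 R)ᶜ, f w ∂μ) * ENNReal.ofReal (1 + R ^ 2) ≤
      ∫⁻ w, f w * ENNReal.ofReal (1 + ‖w‖ ^ 2) ∂μ := by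
  rw [← lintegral_mul_const' _ _ ENNReal.ofReal_ne_top]
  calc ∫⁻ w in (closedBall 0 R)ᶜ, f w * ENNReal.ofReal (1 + R ^ 2) ∂μ
      ≤ ∫⁻ w in (closedBall 0 R)ᶜ, f w * ENNReal.ofReal (1 + ‖w‖ ^ 2) ∂μ := by
        refine setLIntegral_mono' measurableSet_closedBall.compl fun w hw => ?_
        have hRw : R < ‖w‖ := by simpa using hw
        gcongr
    _ ≤ ∫⁻ w, f w * ENNReal.ofReal (1 + ‖w‖ ^ 2) ∂μ := setLIntegral_le_lintegral _ _

lemma half_le_setLIntegral_closedBall (f : E → ℝ≥0∞) {δ lam R : ℝ} (hδ : 0 < δ) (hR : 0 ≤ R)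
    (hlam : lam ≤ δ / 2 * (1 + R ^ 2)) (hmass : ENNReal.ofReal δ ≤ ∫⁻ w, f w ∂μ)
    (henergy : ∫⁻ w, f w * ENNReal.ofReal (1 + ‖w‖ ^ 2) ∂μ ≤ ENNReal.ofReal lam) :
    ENNReal.ofReal (δ / 2) ≤ ∫⁻ w in closedBall 0 R, f w ∂μ := by
  have hweight : ENNReal.ofReal (1 + R ^ 2) ≠ 0 := by
    rw [ENNReal.ofReal_ne_zero_iff]; positivity
  have htail : ∫⁻ w in (closedBall 0 R)ᶜ, f w ∂μ ≤ ENNReal.ofReal (δ / 2) := by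
    rw [← ENNReal.mul_le_mul_iff_left hweight ENNReal.ofReal_ne_top,
      ← ENNReal.ofReal_mul (by positivity)]
    exact (setLIntegral_compl_closedBall_mul_le f hR).trans
      (henergy.trans (ENNReal.ofReal_le_ofReal hlam))
  have hsplit : ENNReal.ofReal (δ / 2) + ENNReal.ofReal (δ / 2) ≤
      ENNReal.ofReal (δ / 2) + ∫⁻ w in closedBall 0 R, f w ∂μ := by
    rw [← ENNReal.ofReal_add (by positivity) (by positivity), add_halves, add_comm]
    calc ENNReal.ofReal δ ≤ ∫⁻ w, f w ∂μ := hmass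
      _ = ∫⁻ w in closedBall 0 R, f w ∂μ + ∫⁻ w in (closedBall 0 R)ᶜ, f w ∂μ :=
          (lintegral_add_compl f measurableSet_closedBall).symm
      _ ≤ _ := by gcongr
  exact (ENNReal.add_le_add_iff_left ENNReal.ofReal_ne_top).1 hsplit

lemma lintegral_inv_norm_sub_mul_ge [NullSingletonClass μ] {f : E → ℝ≥0∞} (hf : Measurable f)
    {m R : ℝ} (hR : 0 ≤ R) (hball : ENNReal.ofReal m ≤ ∫⁻ w in closedBall 0 R, f w ∂μ) (v : E) :
    ENNReal.ofReal (m * (1 + R)⁻¹ * (1 + ‖v‖ ^ 2) ^ (-(1 : ℝ) / 2)) ≤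
      ∫⁻ w, ENNReal.ofReal ‖v - w‖⁻¹ * f w ∂μ := by
  rw [mul_assoc]
  have hk0 : 0 ≤ (1 + R)⁻¹ * (1 + ‖v‖ ^ 2) ^ (-(1 : ℝ) / 2) := by positivity
  set k := (1 + R)⁻¹ * (1 + ‖v‖ ^ 2) ^ (-(1 : ℝ) / 2)
  have hk : ∀ᵐ w ∂μ.restrict (closedBall 0 R), ENNReal.ofReal k * f w ≤
      ENNReal.ofReal ‖v - w‖⁻¹ * f w := by
    filter_upwards [ae_restrict_mem measurableSet_closedBall, ae_restrict_of_ae (μ.ae_ne v)]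
      with w hw hvw
    gcongr
    exact inv_le_inv_norm_sub_of_mem_closedBall hR hw hvw
  calc ENNReal.ofReal (m * k) = ENNReal.ofReal k * ENNReal.ofReal m := by
        rw [ENNReal.ofReal_mul' hk0, mul_comm]
    _ ≤ ENNReal.ofReal k * ∫⁻ w in closedBall 0 R, f w ∂μ := by gcongr
    _ = ∫⁻ w in closedBall 0 R, ENNReal.ofReal k * f w ∂μ := (lintegral_const_mul _ hf).symm
    _ ≤ ∫⁻ w in closedBall 0 R, ENNReal.ofReal ‖v - w‖⁻¹ * f w ∂μ := lintegral_mono_ae hk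
    _ ≤ ∫⁻ w, ENNReal.ofReal ‖v - w‖⁻¹ * f w ∂μ := setLIntegral_le_lintegral _ _

end CoulombLowerBound

/-- Pointwise lower bound on the Coulomb potential of a nonnegative function with mass
at least `δ`, energy at most `λ` and entropy at most `λ`:
`∫ |v − v*|⁻¹ g(v*) dv* ≥ c(δ,λ) ⟨v⟩⁻¹`. -/
theorem stmt_3 (δ lam : ℝ) (hδ : 0 < δ) :
    ∃ c > (0 : ℝ), ∀ g : EuclideanSpace ℝ (Fin 3) → ℝ,
      Measurable g → (∀ v, 0 ≤ g v) →
      ENNReal.ofReal δ ≤ ∫⁻ v, ENNReal.ofReal (g v) →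
      (∫⁻ v, ENNReal.ofReal (g v * (1 + ‖v‖ ^ 2))) ≤ ENNReal.ofReal lam →
      (∫⁻ v, ENNReal.ofReal (g v * Real.log (1 + g v))) ≤ ENNReal.ofReal lam →
      ∀ v : EuclideanSpace ℝ (Fin 3),
        ENNReal.ofReal (c * (1 + ‖v‖ ^ 2) ^ (-(1 : ℝ) / 2)) ≤
          ∫⁻ w, ENNReal.ofReal (‖v - w‖⁻¹ * g w) := by
  set R := √(2 * |lam| / δ)
  have hR : 0 ≤ R := Real.sqrt_nonneg _
  have hlam : lam ≤ δ / 2 * (1 + R ^ 2) := by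
    have hR2 : δ / 2 * R ^ 2 = |lam| := by
      rw [Real.sq_sqrt (by positivity)]
      field_simp
    linarith [le_abs_self lam]
  refine ⟨δ / 2 * (1 + R)⁻¹, by positivity, fun g hg hg0 hmass henergy _ v => ?_⟩
  have henergy' : ∫⁻ w, ENNReal.ofReal (g w) * ENNReal.ofReal (1 + ‖w‖ ^ 2) ≤
      ENNReal.ofReal lam := by
    simpa only [ENNReal.ofReal_mul (hg0 _)] using henergy
  have hball := half_le_setLIntegral_closedBall _ hδ hR hlam hmass henergy'
  simpa only [ENNReal.ofReal_mul (inv_nonneg.2 (norm_nonneg _))] using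
    lintegral_inv_norm_sub_mul_ge hg.ennreal_ofReal hR hball v
end

section
/- Let g : ℝ³ → [0, ∞) be measurable with ∫ g ≥ δ > 0, ∫ g(v)(1+|v|²) dv ≤ λ, and ∫ g log(1+g) dv ≤ λ. Then there is a constant c = c(δ, λ) > 0 such that for every v ∈ ℝ³ and every unit vector ξ ∈ ℝ³, ∑_{i,j} (a_{ij} * g)(v) ξ_i ξ_j ≥ c (1 + |v|²)^{-3/2}, where a(z) = |z|⁻¹ (Id − z⊗z/|z|²) for z ≠ 0. -/
/-
For a unit vector `ξ`, `ξᵀ a(z) ξ = |z⊥|² / |z|³`, where `z⊥` is the component of `z`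
orthogonal to `ξ`. The energy bound leaves mass at most `δ/2` outside a ball of radius `R`. The
entropy bound forbids `g` from putting more than `δ/4` on the tube `{|w| ≤ R, |(v - w)⊥| < ρ}`
around the line `v + ℝξ`, whose volume is at most `8Rρ²`. So at least `δ/4` of the mass lies where
`|w| ≤ R` and `|(v - w)⊥| ≥ ρ`, and there the kernel is at least
`ρ² / (|v| + R)³ ≥ ρ² (1 + R)⁻³ (1 + |v|²)^(-3/2)`.
-/

open MeasureTheory

section PerpNorm

variable {E : Type*} [NormedAddCommGroup E] [InnerProductSpace ℝ E]

/-- For a unit vector `ξ`, `perpNorm (v - w) ξ` is the distance from `w` to the line `v + ℝξ`. -/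
noncomputable def perpNorm (z ξ : E) : ℝ := ‖z - inner ℝ z ξ • ξ‖

theorem perpNorm_sq {ξ : E} (hξ : ‖ξ‖ = 1) (z : E) :
    perpNorm z ξ ^ 2 = ‖z‖ ^ 2 - inner ℝ z ξ ^ 2 := by
  rw [perpNorm, norm_sub_sq_real, real_inner_smul_right, norm_smul, Real.norm_eq_abs, hξ,
    mul_pow, sq_abs]
  ring

theorem perpNorm_le {ξ : E} (hξ : ‖ξ‖ = 1) (z : E) : perpNorm z ξ ≤ ‖z‖ := by
  nlinarith [perpNorm_sq hξ z, sq_nonneg (inner ℝ z ξ), norm_nonneg z,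
    (norm_nonneg _ : 0 ≤ perpNorm z ξ)]

theorem measurableSet_norm_le_and_le_perpNorm [MeasurableSpace E] [OpensMeasurableSpace E]
    (v ξ : E) (R ρ : ℝ) :
    MeasurableSet {w : E | ‖w‖ ≤ R ∧ ρ ≤ perpNorm (v - w) ξ} :=
  (measurableSet_le measurable_norm measurable_const).inter
    (measurableSet_le measurable_const
      (show Continuous fun w => perpNorm (v - w) ξ by unfold perpNorm; fun_prop).measurable)

end PerpNorm

section LandauForm

variable {ι : Type*} [Fintype ι] [DecidableEq ι]

/-- `ξᵀ a(z) ξ` for the Landau–Coulomb matrix `a(z) = |z|⁻¹ (Id - z ⊗ z / |z|²)`. -/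
noncomputable def landauForm (z ξ : EuclideanSpace ℝ ι) : ℝ :=
  ∑ i, ∑ j, (‖z‖⁻¹ * ((if i = j then (1 : ℝ) else 0) - z i * z j / ‖z‖ ^ 2)) * ξ i * ξ j

theorem landauForm_eq (z ξ : EuclideanSpace ℝ ι) :
    landauForm z ξ = ‖z‖⁻¹ * (‖ξ‖ ^ 2 - inner ℝ z ξ ^ 2 / ‖z‖ ^ 2) := by
  have hnorm : ‖ξ‖ ^ 2 = ∑ i, ξ i * ξ i := by
    rw [EuclideanSpace.real_norm_sq_eq]; simp only [sq]
  have hinner : inner ℝ z ξ ^ 2 = ∑ i, ∑ j, z i * ξ i * (z j * ξ j) := by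
    simp [PiLp.inner_apply, sq, Finset.sum_mul_sum, mul_comm]
  rw [hnorm, hinner, landauForm, mul_sub, Finset.mul_sum, Finset.sum_div, Finset.mul_sum,
    ← Finset.sum_sub_distrib]
  refine Finset.sum_congr rfl fun i _ => ?_
  rw [Finset.sum_div, Finset.mul_sum, ← Fintype.sum_ite_eq i (fun j => ‖z‖⁻¹ * (ξ i * ξ j)),
    ← Finset.sum_sub_distrib]
  refine Finset.sum_congr rfl fun j _ => ?_
  split_ifs <;> ring

theorem landauForm_eq_perpNorm {ξ : EuclideanSpace ℝ ι} (hξ : ‖ξ‖ = 1) (z : EuclideanSpace ℝ ι) :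
    landauForm z ξ = perpNorm z ξ ^ 2 / ‖z‖ ^ 3 := by
  rw [landauForm_eq, perpNorm_sq hξ, hξ]
  rcases eq_or_ne ‖z‖ 0 with hz | hz
  · simp [hz]
  · field_simp

theorem div_pow_le_landauForm {v w ξ : EuclideanSpace ℝ ι} (hξ : ‖ξ‖ = 1) {R ρ : ℝ} (hρ : 0 < ρ)
    (hw : ‖w‖ ≤ R) (hperp : ρ ≤ perpNorm (v - w) ξ) :
    ρ ^ 2 / (‖v‖ + R) ^ 3 ≤ landauForm (v - w) ξ := by
  have hρz : ρ ≤ ‖v - w‖ := hperp.trans (perpNorm_le hξ _)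
  rw [landauForm_eq_perpNorm hξ]
  exact div_le_div₀ (sq_nonneg _) (pow_le_pow_left₀ hρ.le hperp 2) (pow_pos (hρ.trans_le hρz) 3)
    (pow_le_pow_left₀ (norm_nonneg _) ((norm_sub_le v w).trans (by linarith)) 3)

end LandauForm

theorem le_add_mul_log_div_log {x K : ℝ} (hx : 0 ≤ x) (hK : 0 < K) :
    x ≤ K + x * Real.log (1 + x) / Real.log (1 + K) := by
  have hlogK : 0 < Real.log (1 + K) := Real.log_pos (by linarith)
  rcases le_or_gt x K with hxK | hKx
  · have : 0 ≤ x * Real.log (1 + x) / Real.log (1 + K) :=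
      div_nonneg (mul_nonneg hx (Real.log_nonneg (by linarith))) hlogK.le
    linarith
  · have : Real.log (1 + K) ≤ Real.log (1 + x) := Real.log_le_log (by linarith) (by linarith)
    have : x ≤ x * Real.log (1 + x) / Real.log (1 + K) := by
      rw [le_div_iff₀ hlogK]; nlinarith
    linarith

theorem one_add_sq_rpow_neg_three_halves_le {x R : ℝ} (hx : 0 ≤ x) (hR : 0 < R) :
    (1 + x ^ 2) ^ (-(3 : ℝ) / 2) ≤ (1 + R) ^ 3 / (x + R) ^ 3 := by
  have hpos : 0 < 1 + x ^ 2 := by positivity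
  set s := √(1 + x ^ 2)
  have hs1 : 1 ≤ s := Real.one_le_sqrt.2 (by nlinarith)
  have hxs : x ≤ s := Real.le_sqrt_of_sq_le (by linarith)
  have hpow : (1 + x ^ 2) ^ (-(3 : ℝ) / 2) = 1 / s ^ 3 := by
    rw [Real.rpow_div_two_eq_sqrt _ hpos.le, Real.rpow_neg (Real.sqrt_nonneg _), one_div]
    norm_cast
  rw [hpow, div_le_div_iff₀ (by positivity) (by positivity), one_mul, ← mul_pow]
  exact pow_le_pow_left₀ (by positivity) (by nlinarith) 3

section Integrals

variable {α : Type*} [MeasurableSpace α] (μ : Measure α)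

theorem setLIntegral_le_mul_measure_add_entropy (g : α → ℝ) (hg : ∀ x, 0 ≤ g x) {K : ℝ}
    (hK : 0 < K) (s : Set α) :
    ∫⁻ x in s, ENNReal.ofReal (g x) ∂μ ≤ ENNReal.ofReal K * μ s +
      (∫⁻ x, ENNReal.ofReal (g x * Real.log (1 + g x)) ∂μ) / ENNReal.ofReal (Real.log (1 + K)) := by
  have hlogK : 0 < Real.log (1 + K) := Real.log_pos (by linarith)
  calc ∫⁻ x in s, ENNReal.ofReal (g x) ∂μ
      ≤ ∫⁻ x in s, (ENNReal.ofReal K +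
          ENNReal.ofReal (g x * Real.log (1 + g x)) / ENNReal.ofReal (Real.log (1 + K))) ∂μ := by
        refine lintegral_mono fun x => ?_
        rw [← ENNReal.ofReal_div_of_pos hlogK, ← ENNReal.ofReal_add hK.le (div_nonneg
          (mul_nonneg (hg x) (Real.log_nonneg (by linarith [hg x]))) hlogK.le)]
        exact ENNReal.ofReal_le_ofReal (le_add_mul_log_div_log (hg x) hK)
    _ = ENNReal.ofReal K * μ s +
          (∫⁻ x in s, ENNReal.ofReal (g x * Real.log (1 + g x)) ∂μ) /
            ENNReal.ofReal (Real.log (1 + K)) := by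
        simp_rw [div_eq_mul_inv]
        rw [lintegral_add_left measurable_const, setLIntegral_const,
          lintegral_mul_const' _ _ (ENNReal.inv_ne_top.2 (ENNReal.ofReal_pos.2 hlogK).ne')]
    _ ≤ _ := by gcongr; exact Measure.restrict_le_self

theorem ofReal_mul_setLIntegral_le_lintegral {f g : α → ℝ} {s : Set α} (hs : MeasurableSet s)
    {η : ℝ} (hη : 0 ≤ η) (hf : ∀ x ∈ s, η ≤ f x) (hg : ∀ x ∈ s, 0 ≤ g x) :
    ENNReal.ofReal η * ∫⁻ x in s, ENNReal.ofReal (g x) ∂μ ≤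
      ∫⁻ x, ENNReal.ofReal (f x * g x) ∂μ := by
  rw [← lintegral_const_mul' _ _ ENNReal.ofReal_ne_top]
  simp_rw [← ENNReal.ofReal_mul hη]
  calc ∫⁻ x in s, ENNReal.ofReal (η * g x) ∂μ ≤ ∫⁻ x in s, ENNReal.ofReal (f x * g x) ∂μ :=
        setLIntegral_mono' hs fun x hx =>
          ENNReal.ofReal_le_ofReal (mul_le_mul_of_nonneg_right (hf x hx) (hg x hx))
    _ ≤ ∫⁻ x, ENNReal.ofReal (f x * g x) ∂μ := setLIntegral_le_lintegral _ _

end Integrals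

theorem setLIntegral_norm_gt_le_div_sq {E : Type*} [NormedAddCommGroup E] [MeasurableSpace E]
    [OpensMeasurableSpace E] (μ : Measure E) (g : E → ℝ) (hg : ∀ w, 0 ≤ g w) {R : ℝ} (hR : 0 < R) :
    ∫⁻ w in {w | R < ‖w‖}, ENNReal.ofReal (g w) ∂μ ≤
      (∫⁻ w, ENNReal.ofReal (g w * (1 + ‖w‖ ^ 2)) ∂μ) / ENNReal.ofReal (R ^ 2) := by
  rw [ENNReal.le_div_iff_mul_le (Or.inl (ENNReal.ofReal_pos.2 (by positivity)).ne')
    (Or.inl ENNReal.ofReal_ne_top), ← lintegral_mul_const' _ _ ENNReal.ofReal_ne_top]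
  refine (setLIntegral_mono' (measurableSet_lt measurable_const measurable_norm)
    fun w hw => ?_).trans (setLIntegral_le_lintegral _ _)
  have hRw : R < ‖w‖ := hw
  rw [← ENNReal.ofReal_mul (hg w)]
  exact ENNReal.ofReal_le_ofReal (mul_le_mul_of_nonneg_left (by nlinarith) (hg w))

section Coercivity

variable {E : Type*} [NormedAddCommGroup E] [InnerProductSpace ℝ E] [FiniteDimensional ℝ E]
  [MeasurableSpace E] [BorelSpace E]

theorem volume_norm_le_perpNorm_lt_le {n : ℕ} (hn : Module.finrank ℝ E = n + 1) (v : E) {ξ : E}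
    (hξ : ‖ξ‖ = 1) (R ρ : ℝ) :
    volume {w : E | ‖w‖ ≤ R ∧ perpNorm (v - w) ξ < ρ} ≤
      ENNReal.ofReal (2 * R) * ENNReal.ofReal (2 * ρ) ^ n := by
  obtain ⟨b, hb⟩ := Orthonormal.exists_orthonormalBasis_extension_of_card_eq (𝕜 := ℝ)
    (ι := Fin (n + 1)) (v := fun _ => ξ) (s := {0}) (by simp [hn])
    ⟨fun _ => hξ, fun i j hij => (hij (Subtype.ext (i.2.trans j.2.symm))).elim⟩
  have hb0 : b 0 = ξ := hb 0 rfl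
  -- in the coordinates of `b`, the tube lies in `[-R, R] × ∏ⱼ [vⱼ - ρ, vⱼ + ρ]`
  let box : Set (Fin (n + 1) → ℝ) := Set.univ.pi <|
    Fin.cons (Metric.closedBall 0 R) fun j => Metric.closedBall (b.repr v j.succ) ρ
  have hmp : MeasurePreserving (fun w => (b.repr w).ofLp) :=
    (PiLp.volume_preserving_ofLp _).comp b.measurePreserving_repr
  have hsub : {w : E | ‖w‖ ≤ R ∧ perpNorm (v - w) ξ < ρ} ⊆ (fun w => (b.repr w).ofLp) ⁻¹' box := by
    rintro w ⟨hwR, hwρ⟩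
    simp only [box, Set.mem_preimage, Set.mem_univ_pi, Fin.forall_fin_succ, Fin.cons_zero,
      Fin.cons_succ, Metric.mem_closedBall, Real.dist_eq, b.repr_apply_apply, sub_zero]
    refine ⟨?_, fun j => ?_⟩
    · calc |inner ℝ (b 0) w| ≤ ‖b 0‖ * ‖w‖ := abs_real_inner_le_norm _ _
        _ ≤ R := by rw [hb0, hξ, one_mul]; exact hwR
    · have hperp : inner ℝ (b j.succ) (v - w - inner ℝ (v - w) ξ • ξ) =
          inner ℝ (b j.succ) v - inner ℝ (b j.succ) w := by
        rw [inner_sub_right, real_inner_smul_right, ← hb0, b.orthonormal.2 (Fin.succ_ne_zero j),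
          mul_zero, sub_zero, inner_sub_right]
      calc |inner ℝ (b j.succ) w - inner ℝ (b j.succ) v|
          = |inner ℝ (b j.succ) (v - w - inner ℝ (v - w) ξ • ξ)| := by rw [hperp, abs_sub_comm]
        _ ≤ ‖b j.succ‖ * perpNorm (v - w) ξ := abs_real_inner_le_norm _ _
        _ ≤ ρ := by rw [b.orthonormal.1, one_mul]; exact hwρ.le
  have hbox : MeasurableSet box :=
    MeasurableSet.univ_pi <| Fin.cases Metric.isClosed_closedBall.measurableSet
      fun j => Metric.isClosed_closedBall.measurableSet
  calc volume {w : E | ‖w‖ ≤ R ∧ perpNorm (v - w) ξ < ρ}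
      ≤ volume ((fun w => (b.repr w).ofLp) ⁻¹' box) := measure_mono hsub
    _ = volume box := hmp.measure_preimage hbox.nullMeasurableSet
    _ = ENNReal.ofReal (2 * R) * ENNReal.ofReal (2 * ρ) ^ n := by
      simp [box, volume_pi_pi, Fin.prod_univ_succ, Real.volume_closedBall]

theorem lintegral_le_setLIntegral_add_tail_add_tube {n : ℕ} (hn : Module.finrank ℝ E = n + 1)
    (g : E → ℝ) (hg : ∀ w, 0 ≤ g w) (v : E) {ξ : E} (hξ : ‖ξ‖ = 1) {R ρ K : ℝ} (hR : 0 < R) (hK : 0 < K) :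
    ∫⁻ w, ENNReal.ofReal (g w) ≤
      (∫⁻ w in {w | ‖w‖ ≤ R ∧ ρ ≤ perpNorm (v - w) ξ}, ENNReal.ofReal (g w)) +
        ((∫⁻ w, ENNReal.ofReal (g w * (1 + ‖w‖ ^ 2))) / ENNReal.ofReal (R ^ 2) +
          (ENNReal.ofReal K * (ENNReal.ofReal (2 * R) * ENNReal.ofReal (2 * ρ) ^ n) +
            (∫⁻ w, ENNReal.ofReal (g w * Real.log (1 + g w))) /
              ENNReal.ofReal (Real.log (1 + K)))) := by
  set A := {w : E | ‖w‖ ≤ R ∧ ρ ≤ perpNorm (v - w) ξ}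
  have hA : MeasurableSet A := measurableSet_norm_le_and_le_perpNorm v ξ R ρ
  have hcompl : Aᶜ ⊆ {w | R < ‖w‖} ∪ {w | ‖w‖ ≤ R ∧ perpNorm (v - w) ξ < ρ} := by
    intro w hw
    simp only [A, Set.mem_compl_iff, Set.mem_ofPred_eq, not_and, not_le] at hw
    by_cases hwR : ‖w‖ ≤ R
    · exact Or.inr ⟨hwR, hw hwR⟩
    · exact Or.inl (not_le.1 hwR)
  calc ∫⁻ w, ENNReal.ofReal (g w)
      = (∫⁻ w in A, ENNReal.ofReal (g w)) + ∫⁻ w in Aᶜ, ENNReal.ofReal (g w) :=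
        (lintegral_add_compl _ hA).symm
    _ ≤ (∫⁻ w in A, ENNReal.ofReal (g w)) + ((∫⁻ w in {w | R < ‖w‖}, ENNReal.ofReal (g w)) +
          ∫⁻ w in {w | ‖w‖ ≤ R ∧ perpNorm (v - w) ξ < ρ}, ENNReal.ofReal (g w)) := by
        gcongr
        exact (lintegral_mono_set hcompl).trans (lintegral_union_le _ _ _)
    _ ≤ _ := by
        gcongr
        · exact setLIntegral_norm_gt_le_div_sq _ g hg hR
        · refine (setLIntegral_le_mul_measure_add_entropy _ g hg hK _).trans ?_
          gcongr
          exact volume_norm_le_perpNorm_lt_le hn v hξ R ρ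

theorem ofReal_le_setLIntegral_of_moments {n : ℕ} (hn : Module.finrank ℝ E = n + 1) (g : E → ℝ)
    (hg : ∀ w, 0 ≤ g w) (v : E) {ξ : E} (hξ : ‖ξ‖ = 1) {δ Λ R ρ K : ℝ} (hδ : 0 ≤ δ)
    (hR : 0 < R) (hρ : 0 ≤ ρ) (hK : 0 < K) (hRδ : Λ / R ^ 2 = δ / 2)
    (hKδ : Λ / Real.log (1 + K) = δ / 8)
    (hρδ : K * (2 * R * (2 * ρ) ^ n) = δ / 8)
    (hmass : ENNReal.ofReal δ ≤ ∫⁻ w, ENNReal.ofReal (g w))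
    (hE : (∫⁻ w, ENNReal.ofReal (g w * (1 + ‖w‖ ^ 2))) ≤ ENNReal.ofReal Λ)
    (hH : (∫⁻ w, ENNReal.ofReal (g w * Real.log (1 + g w))) ≤ ENNReal.ofReal Λ) :
    ENNReal.ofReal (δ / 4) ≤
      ∫⁻ w in {w | ‖w‖ ≤ R ∧ ρ ≤ perpNorm (v - w) ξ}, ENNReal.ofReal (g w) := by
  have hlogK : 0 < Real.log (1 + K) := Real.log_pos (by linarith)
  have htail : (∫⁻ w, ENNReal.ofReal (g w * (1 + ‖w‖ ^ 2))) / ENNReal.ofReal (R ^ 2) ≤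
      ENNReal.ofReal (δ / 2) := by
    rw [← hRδ, ENNReal.ofReal_div_of_pos (by positivity)]
    gcongr
  have htube : ENNReal.ofReal K * (ENNReal.ofReal (2 * R) * ENNReal.ofReal (2 * ρ) ^ n) =
      ENNReal.ofReal (δ / 8) := by
    rw [← hρδ, ← ENNReal.ofReal_pow (by positivity), ← ENNReal.ofReal_mul (by positivity),
      ← ENNReal.ofReal_mul hK.le]
  have hentropy : (∫⁻ w, ENNReal.ofReal (g w * Real.log (1 + g w))) /
      ENNReal.ofReal (Real.log (1 + K)) ≤ ENNReal.ofReal (δ / 8) := by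
    rw [← hKδ, ENNReal.ofReal_div_of_pos hlogK]
    gcongr
  have hsum : ENNReal.ofReal (δ / 2) + (ENNReal.ofReal (δ / 8) + ENNReal.ofReal (δ / 8)) =
      ENNReal.ofReal (3 * δ / 4) := by
    rw [← ENNReal.ofReal_add (by positivity) (by positivity),
      ← ENNReal.ofReal_add (by positivity) (by positivity)]
    ring_nf
  refine (ENNReal.add_le_add_iff_right (ENNReal.ofReal_ne_top (r := 3 * δ / 4))).1 ?_
  calc ENNReal.ofReal (δ / 4) + ENNReal.ofReal (3 * δ / 4) = ENNReal.ofReal δ := by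
        rw [← ENNReal.ofReal_add (by positivity) (by positivity)]; ring_nf
    _ ≤ _ := hmass.trans (lintegral_le_setLIntegral_add_tail_add_tube hn g hg v hξ hR hK)
    _ ≤ _ := by
        rw [← hsum, htube]
        gcongr

end Coercivity

theorem exists_coercivity_radii {δ Λ : ℝ} (hδ : 0 < δ) (hΛ : 0 < Λ) :
    ∃ R K ρ : ℝ, 0 < R ∧ 0 < K ∧ 0 < ρ ∧ Λ / R ^ 2 = δ / 2 ∧
      Λ / Real.log (1 + K) = δ / 8 ∧ K * (2 * R * (2 * ρ) ^ 2) = δ / 8 := by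
  set R := √(2 * Λ / δ)
  set K := Real.exp (8 * Λ / δ) - 1
  have hR : 0 < R := Real.sqrt_pos.2 (by positivity)
  have hK : 0 < K := sub_pos.2 (Real.one_lt_exp_iff.2 (by positivity))
  have hρ : 0 < δ / (64 * K * R) := by positivity
  refine ⟨R, K, √(δ / (64 * K * R)), hR, hK, Real.sqrt_pos.2 hρ, ?_, ?_, ?_⟩
  · rw [Real.sq_sqrt (by positivity)]; field_simp
  · rw [add_sub_cancel, Real.log_exp]; field_simp
  · rw [mul_pow, Real.sq_sqrt hρ.le]; field_simp; ring

theorem exists_landauForm_coercivity {δ Λ : ℝ} (hδ : 0 < δ) (hΛ : 0 < Λ) :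
    ∃ c > (0 : ℝ), ∀ g : EuclideanSpace ℝ (Fin 3) → ℝ, (∀ v, 0 ≤ g v) →
      ENNReal.ofReal δ ≤ ∫⁻ v, ENNReal.ofReal (g v) →
      (∫⁻ v, ENNReal.ofReal (g v * (1 + ‖v‖ ^ 2))) ≤ ENNReal.ofReal Λ →
      (∫⁻ v, ENNReal.ofReal (g v * Real.log (1 + g v))) ≤ ENNReal.ofReal Λ →
      ∀ v ξ : EuclideanSpace ℝ (Fin 3), ‖ξ‖ = 1 →
        ENNReal.ofReal (c * (1 + ‖v‖ ^ 2) ^ (-(3 : ℝ) / 2)) ≤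
          ∫⁻ w, ENNReal.ofReal (landauForm (v - w) ξ * g w) := by
  obtain ⟨R, K, ρ, hR, hK, hρ, hRδ, hKδ, hρδ⟩ := exists_coercivity_radii hδ hΛ
  refine ⟨δ / 4 * ρ ^ 2 / (1 + R) ^ 3, by positivity, fun g hg hmass hE hH v ξ hξ => ?_⟩
  have hη : 0 ≤ ρ ^ 2 / (‖v‖ + R) ^ 3 := by positivity
  have hweight : δ / 4 * ρ ^ 2 / (1 + R) ^ 3 * (1 + ‖v‖ ^ 2) ^ (-(3 : ℝ) / 2) ≤
      ρ ^ 2 / (‖v‖ + R) ^ 3 * (δ / 4) :=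
    calc _ ≤ δ / 4 * ρ ^ 2 / (1 + R) ^ 3 * ((1 + R) ^ 3 / (‖v‖ + R) ^ 3) := by
          gcongr; exact one_add_sq_rpow_neg_three_halves_le (norm_nonneg v) hR
      _ = ρ ^ 2 / (‖v‖ + R) ^ 3 * (δ / 4) := by field_simp
  calc ENNReal.ofReal (δ / 4 * ρ ^ 2 / (1 + R) ^ 3 * (1 + ‖v‖ ^ 2) ^ (-(3 : ℝ) / 2))
      ≤ ENNReal.ofReal (ρ ^ 2 / (‖v‖ + R) ^ 3) * ENNReal.ofReal (δ / 4) := by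
        rw [← ENNReal.ofReal_mul hη]; exact ENNReal.ofReal_le_ofReal hweight
    _ ≤ ENNReal.ofReal (ρ ^ 2 / (‖v‖ + R) ^ 3) *
          ∫⁻ w in {w | ‖w‖ ≤ R ∧ ρ ≤ perpNorm (v - w) ξ}, ENNReal.ofReal (g w) := by
        gcongr
        exact ofReal_le_setLIntegral_of_moments finrank_euclideanSpace_fin g hg v hξ hδ.le hR
          hρ.le hK hRδ hKδ hρδ hmass hE hH
    _ ≤ ∫⁻ w, ENNReal.ofReal (landauForm (v - w) ξ * g w) :=
        ofReal_mul_setLIntegral_le_lintegral _ (measurableSet_norm_le_and_le_perpNorm v ξ R ρ) hη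
          (fun w hw => div_pow_le_landauForm hξ hρ hw.1 hw.2) fun w _ => hg w

/-- Coercivity lower bound for the Landau–Coulomb diffusion matrix: for `g ≥ 0` with mass
at least `δ`, energy and entropy at most `λ`, every `v` and every unit vector `ξ`,
`∑ᵢⱼ (aᵢⱼ * g)(v) ξᵢ ξⱼ ≥ c(δ,λ) (1+|v|²)^{-3/2}`. -/
theorem stmt_4 (δ lam : ℝ) (hδ : 0 < δ) :
    ∃ c > (0 : ℝ), ∀ g : EuclideanSpace ℝ (Fin 3) → ℝ,
      Measurable g → (∀ v, 0 ≤ g v) →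
      ENNReal.ofReal δ ≤ ∫⁻ v, ENNReal.ofReal (g v) →
      (∫⁻ v, ENNReal.ofReal (g v * (1 + ‖v‖ ^ 2))) ≤ ENNReal.ofReal lam →
      (∫⁻ v, ENNReal.ofReal (g v * Real.log (1 + g v))) ≤ ENNReal.ofReal lam →
      ∀ v ξ : EuclideanSpace ℝ (Fin 3), ‖ξ‖ = 1 →
        ENNReal.ofReal (c * (1 + ‖v‖ ^ 2) ^ (-(3 : ℝ) / 2)) ≤
          ∫⁻ w, ENNReal.ofReal
            ((∑ i, ∑ j, (‖v - w‖⁻¹ * ((if i = j then (1 : ℝ) else 0) -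
              (v - w) i * (v - w) j / ‖v - w‖ ^ 2)) * ξ i * ξ j) * g w) := by
  obtain ⟨c, hc, hcoer⟩ := exists_landauForm_coercivity hδ (lt_max_of_lt_right hδ : 0 < max lam δ)
  have hlam : ENNReal.ofReal lam ≤ ENNReal.ofReal (max lam δ) :=
    ENNReal.ofReal_le_ofReal (le_max_left _ _)
  exact ⟨c, hc, fun g _ hg hmass hE hH v ξ hξ =>
    hcoer g hg hmass (hE.trans hlam) (hH.trans hlam) v ξ hξ⟩
end

section
/- Let 0 < β ≤ 2 and a > 0, and define G(v)² = ∑_{ℓ=0}^∞ a^{(2/β)ℓ} ⟨v⟩^{2ℓ} / (ℓ!)^{2/β} for v ∈ ℝ³, with ⟨v⟩ = (1+|v|²)^{1/2}. Then there exist constants c_β > 0 (depending only on β) and C_{a,β} > 0 such that C_{a,β} exp((c_β a / 2) ⟨v⟩^β) ≤ G(v) ≤ C_{a,β}⁻¹ exp(c_β a ⟨v⟩^β) for all v ∈ ℝ³ — that is, G is comparable from above and below to stretched exponentials of ⟨v⟩^β. -/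
/-!
Write `x = a ⟨v⟩^β` and `p = 2/β ≥ 1`; then `G(v)² = ∑ (x^ℓ/ℓ!)^p`. For `p ≥ 1` the `ℓ^p` norm of a
nonnegative sequence is at most its `ℓ^1` norm, so `G² ≤ (e^x)^p`. Conversely, Hölder's
inequality against the weights `2^{-ℓ}`, whose `ℓ^q` norm is at most `2`, bounds
`e^{x/2} = ∑ (x^ℓ/ℓ!) 2^{-ℓ}` by `2 G^{2/p}`, so `G² ≥ 2^{-p} e^{px/2}`. Taking square roots
gives the claim with `c_β = 1/β` and `C = 2^{-1/β}`.
-/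

open Real

lemma summable_rpow_and_tsum_rpow_le {ι : Type*} {t : ι → ℝ} {p : ℝ} (hp : 1 ≤ p)
    (ht : ∀ i, 0 ≤ t i) (hts : Summable t) :
    Summable (fun i => t i ^ p) ∧ ∑' i, t i ^ p ≤ (∑' i, t i) ^ p := by
  set T := ∑' i, t i
  have hp' : (p - 1) + 1 ≠ 0 := by linarith
  have hbound : ∀ i, t i ^ p ≤ T ^ (p - 1) * t i := fun i => by
    calc t i ^ p = t i ^ (p - 1) * t i := by rw [← rpow_add_one' (ht i) hp', sub_add_cancel]
      _ ≤ T ^ (p - 1) * t i := by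
          have hti := ht i
          have hle : t i ≤ T := hts.le_tsum i fun j _ => ht j
          gcongr
  have hsum : Summable fun i => t i ^ p :=
    (hts.mul_left _).of_nonneg_of_le (fun i => rpow_nonneg (ht i) p) hbound
  refine ⟨hsum, ?_⟩
  calc ∑' i, t i ^ p ≤ ∑' i, T ^ (p - 1) * t i := hsum.tsum_le_tsum hbound (hts.mul_left _)
    _ = T ^ p := by
        rw [tsum_mul_left, ← rpow_add_one' (tsum_nonneg ht) hp', sub_add_cancel]

lemma tsum_mul_half_pow_rpow_le {t : ℕ → ℝ} {p : ℝ} (hp : 1 ≤ p) (ht : ∀ n, 0 ≤ t n)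
    (htp : Summable fun n => t n ^ p) :
    (∑' n, t n * (1 / 2) ^ n) ^ p ≤ 2 ^ p * ∑' n, t n ^ p := by
  set g : ℕ → ℝ := fun n => (1 / 2) ^ n
  have hg : ∀ n, 0 ≤ g n := fun n => by positivity
  have hg1 : ∀ n, g n ≤ 1 := fun n => pow_le_one₀ (by norm_num) (by norm_num)
  have hA : 0 ≤ ∑' n, t n ^ p := tsum_nonneg fun n => rpow_nonneg (ht n) p
  rcases hp.eq_or_lt with rfl | hp
  · simp only [rpow_one] at htp hA ⊢
    have htg : ∑' n, t n * g n ≤ ∑' n, t n :=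
      Summable.tsum_le_tsum (fun n => mul_le_of_le_one_right (ht n) (hg1 n))
        (htp.of_nonneg_of_le (fun n => mul_nonneg (ht n) (hg n))
          fun n => mul_le_of_le_one_right (ht n) (hg1 n)) htp
    linarith
  set q := p.conjExponent
  have hpq : p.HolderConjugate q := .conjExponent hp
  have hgq : ∀ n, g n ^ q ≤ g n := fun n =>
    rpow_le_self_of_le_one (hg n) (hg1 n) hpq.symm.lt.le
  have hgq_sum : Summable fun n => g n ^ q :=
    summable_geometric_two.of_nonneg_of_le (fun n => rpow_nonneg (hg n) q) hgq
  have hB : (∑' n, g n ^ q) ^ (1 / q) ≤ 2 := by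
    have hB2 : ∑' n, g n ^ q ≤ 2 :=
      tsum_geometric_two ▸ hgq_sum.tsum_le_tsum hgq summable_geometric_two
    have hq : 0 < 1 / q := one_div_pos.2 hpq.symm.pos
    calc (∑' n, g n ^ q) ^ (1 / q) ≤ 2 ^ (1 / q) :=
          rpow_le_rpow (tsum_nonneg fun n => rpow_nonneg (hg n) q) hB2 hq.le
      _ ≤ 2 ^ (1 : ℝ) :=
          rpow_le_rpow_of_exponent_le (by norm_num) ((div_le_one hpq.symm.pos).2 hpq.symm.lt.le)
      _ = 2 := rpow_one 2
  have holder := inner_le_Lp_mul_Lq_tsum_of_nonneg hpq ht hg htp hgq_sum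
  calc (∑' n, t n * g n) ^ p ≤ ((∑' n, t n ^ p) ^ (1 / p) * 2) ^ p := by
        gcongr
        · exact tsum_nonneg fun n => mul_nonneg (ht n) (hg n)
        · exact holder.trans (by gcongr)
    _ = 2 ^ p * ∑' n, t n ^ p := by
        rw [mul_rpow (by positivity) (by norm_num), ← rpow_mul hA, one_div_mul_cancel (by linarith),
          rpow_one, mul_comm]

namespace Real

lemma tsum_pow_div_factorial (x : ℝ) : ∑' n : ℕ, x ^ n / (n.factorial : ℝ) = exp x := by
  rw [exp_eq_exp_ℝ, NormedSpace.exp_eq_tsum_div]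

variable {p x : ℝ}

lemma summable_pow_div_factorial_rpow (hp : 1 ≤ p) (hx : 0 ≤ x) :
    Summable fun n : ℕ => (x ^ n / n.factorial) ^ p :=
  (summable_rpow_and_tsum_rpow_le hp (fun n => by positivity) (summable_pow_div_factorial x)).1

lemma tsum_pow_div_factorial_rpow_le (hp : 1 ≤ p) (hx : 0 ≤ x) :
    ∑' n : ℕ, (x ^ n / n.factorial) ^ p ≤ exp (p * x) := by
  rw [mul_comm, exp_mul, ← tsum_pow_div_factorial]
  exact (summable_rpow_and_tsum_rpow_le hp (fun n => by positivity)
    (summable_pow_div_factorial x)).2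

lemma exp_mul_div_two_le_tsum_pow_div_factorial_rpow (hp : 1 ≤ p) (hx : 0 ≤ x) :
    exp (p * x / 2) ≤ 2 ^ p * ∑' n : ℕ, (x ^ n / n.factorial) ^ p := by
  have hsplit : ∀ n : ℕ, (x / 2) ^ n / n.factorial = x ^ n / n.factorial * (1 / 2) ^ n :=
    fun n => by ring
  rw [mul_div_assoc, mul_comm, exp_mul, ← tsum_pow_div_factorial, tsum_congr hsplit]
  exact tsum_mul_half_pow_rpow_le hp (fun n => by positivity)
    (summable_pow_div_factorial_rpow hp hx)

end Real

lemma mul_rpow_pow_div_factorial_rpow {a s β : ℝ} (ha : 0 ≤ a) (hs : 0 ≤ s) (hβ : β ≠ 0)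
    (ℓ : ℕ) :
    ((a * s ^ β) ^ ℓ / ℓ.factorial) ^ (2 / β) =
      a ^ ((2 / β) * ℓ) * s ^ (2 * ℓ) / (ℓ.factorial : ℝ) ^ (2 / β) := by
  rw [div_rpow (by positivity) (by positivity), mul_pow, mul_rpow (by positivity) (by positivity),
    ← rpow_natCast a, ← rpow_mul ha, ← rpow_natCast (s ^ β), ← rpow_mul hs, ← rpow_mul hs,
    ← rpow_natCast s]
  congr 3
  · ring
  · push_cast
    field_simp

/-- The exponential-moment weight `G(v)² = ∑_ℓ a^{(2/β)ℓ} ⟨v⟩^{2ℓ}/(ℓ!)^{2/β}` is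
comparable, from above and below, to stretched exponentials of `⟨v⟩^β`. -/
theorem stmt_12 (β : ℝ) (hβ1 : 0 < β) (hβ2 : β ≤ 2) :
    ∃ c > (0 : ℝ), ∀ a : ℝ, 0 < a → ∃ C > (0 : ℝ),
      ∀ v : EuclideanSpace ℝ (Fin 3),
        C * Real.exp (c * a / 2 * Real.sqrt (1 + ‖v‖ ^ 2) ^ β) ≤
          Real.sqrt (∑' ℓ : ℕ, a ^ ((2 / β) * (ℓ : ℝ)) *
            Real.sqrt (1 + ‖v‖ ^ 2) ^ (2 * ℓ) / (Nat.factorial ℓ : ℝ) ^ (2 / β)) ∧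
        Real.sqrt (∑' ℓ : ℕ, a ^ ((2 / β) * (ℓ : ℝ)) *
            Real.sqrt (1 + ‖v‖ ^ 2) ^ (2 * ℓ) / (Nat.factorial ℓ : ℝ) ^ (2 / β)) ≤
          C⁻¹ * Real.exp (c * a * Real.sqrt (1 + ‖v‖ ^ 2) ^ β) := by
  have hp : 1 ≤ 2 / β := (one_le_div hβ1).2 hβ2
  refine ⟨1 / β, by positivity, fun a ha => ⟨(√(2 ^ (2 / β)))⁻¹, by positivity, fun v => ?_⟩⟩
  set s := √(1 + ‖v‖ ^ 2)
  have hx : 0 ≤ a * s ^ β := by positivity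
  rw [← tsum_congr (mul_rpow_pow_div_factorial_rpow ha.le (sqrt_nonneg _) hβ1.ne')]
  constructor
  · calc (√(2 ^ (2 / β)))⁻¹ * exp (1 / β * a / 2 * s ^ β)
          = √(exp (2 / β * (a * s ^ β) / 2) / 2 ^ (2 / β)) := by
            rw [sqrt_div' _ (by positivity), ← exp_half]
            ring_nf
      _ ≤ _ := sqrt_le_sqrt <| (div_le_iff₀' (by positivity)).2 <|
            exp_mul_div_two_le_tsum_pow_div_factorial_rpow hp hx
  · calc _ ≤ √(exp (2 / β * (a * s ^ β))) := sqrt_le_sqrt (tsum_pow_div_factorial_rpow_le hp hx)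
      _ = exp (1 / β * a * s ^ β) := by rw [← exp_half]; congr 1; ring
      _ ≤ _ := by
          rw [inv_inv]
          exact le_mul_of_one_le_left (exp_pos _).le <|
            one_le_sqrt.2 (one_le_rpow (by norm_num) (by positivity))
end
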